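/- For integers Λ ≥ 2, 0 ≤ t ≤ Λ-1, and any nonincreasing profile L = (L_1,...,L_Λ) of nonnegative integers summing to K with Λ dividing K, the rate R^s(L) = Σ_{r=1}^{Λ-t} L_r·C(Λ-r, t) / C(Λ-1, t) is minimized over all such profiles by the uniform profile L_unif = (K/Λ,...,K/Λ), and R^s(L_unif) = K/(t+1). -/

import Mathlib

/-!
The weights `w r = (Λ - r).choose t` are nonincreasing in `r`, vanish for `r > Λ - t` and sum to
`Λ.choose (t + 1)` (hockey stick). Chebyshev's sum inequality for the two nonincreasing sequences
`L` and `w` gives `Λ * ∑ L r * w r ≥ (∑ L r) * (∑ w r)`, and `Λ * (Λ - 1).choose t =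
(t + 1) * Λ.choose (t + 1)` turns this into `R^s(L) ≥ K / (t + 1)`, with equality for a constant
profile.
-/

open Finset

theorem sum_range_choose_eq_choose_succ (n t : ℕ) :
    ∑ j ∈ range n, j.choose t = n.choose (t + 1) := by
  induction n with
  | zero => simp
  | succ n ih => rw [sum_range_succ, ih, Nat.choose_succ_succ', add_comm]

theorem sum_Icc_choose_sub (n t : ℕ) : ∑ r ∈ Icc 1 n, (n - r).choose t = n.choose (t + 1) := by
  rw [← Ico_add_one_right_eq_Icc, sum_Ico_eq_sum_range, Nat.add_sub_cancel,
    ← sum_range_choose_eq_choose_succ, ← sum_range_reflect]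
  refine sum_congr rfl fun j hj => ?_
  rw [mem_range] at hj
  congr 1
  omega

theorem mul_choose_pred_eq (n t : ℕ) : n * (n - 1).choose t = n.choose (t + 1) * (t + 1) := by
  cases n with
  | zero => simp
  | succ n => exact Nat.add_one_mul_choose_eq n t

theorem sum_Icc_sub_mul_choose_sub_eq {R : Type*} [NonAssocSemiring R] (n t : ℕ) (f : ℕ → R) :
    ∑ r ∈ Icc 1 (n - t), f r * (n - r).choose t = ∑ r ∈ Icc 1 n, f r * (n - r).choose t := by
  refine sum_subset (Icc_subset_Icc_right (n.sub_le t)) fun r hr hr' => ?_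
  simp only [mem_Icc, not_and, not_le] at hr hr'
  rw [Nat.choose_eq_zero_of_lt (by omega), Nat.cast_zero, mul_zero]

theorem choose_succ_div_choose_pred {n t : ℕ} (ht : t ≤ n - 1) :
    (n.choose (t + 1) : ℝ) / (n - 1).choose t = n / (t + 1) := by
  have : ((n - 1).choose t : ℝ) ≠ 0 := by exact_mod_cast (Nat.choose_pos ht).ne'
  rw [div_eq_div_iff this (by positivity)]
  exact_mod_cast (mul_choose_pred_eq n t).symm

noncomputable def sharedCacheRate (Λ t : ℕ) (L : ℕ → ℕ) : ℝ :=
  (∑ r ∈ Icc 1 (Λ - t), (L r : ℝ) * (Λ - r).choose t) / (Λ - 1).choose t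

theorem sharedCacheRate_eq (Λ t : ℕ) (L : ℕ → ℕ) :
    sharedCacheRate Λ t L = (∑ r ∈ Icc 1 Λ, (L r : ℝ) * (Λ - r).choose t) / (Λ - 1).choose t := by
  rw [sharedCacheRate, sum_Icc_sub_mul_choose_sub_eq]

theorem sharedCacheRate_const {Λ t : ℕ} (ht : t ≤ Λ - 1) (c : ℕ) :
    sharedCacheRate Λ t (fun _ => c) = c * Λ / (t + 1) := by
  rw [sharedCacheRate_eq, ← mul_sum, ← Nat.cast_sum, sum_Icc_choose_sub, mul_div_assoc,
    choose_succ_div_choose_pred ht, mul_div_assoc]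

theorem sum_div_succ_le_sharedCacheRate {Λ t : ℕ} {L : ℕ → ℕ} (ht : t ≤ Λ - 1)
    (hL : AntitoneOn L (Icc 1 Λ)) :
    (∑ r ∈ Icc 1 Λ, (L r : ℝ)) / (t + 1) ≤ sharedCacheRate Λ t L := by
  rcases Nat.eq_zero_or_pos Λ with rfl | hΛ
  · simp [sharedCacheRate]
  have hweight : Antitone fun r => ((Λ - r).choose t : ℝ) := fun a b hab =>
    Nat.cast_le.mpr (Nat.choose_le_choose t (Nat.sub_le_sub_left hab Λ))
  have hcheb := ((Nat.mono_cast.comp_antitoneOn hL).monovaryOn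
    (hweight.antitoneOn _)).sum_mul_sum_le_card_mul_sum
  rw [Nat.card_Icc, Nat.add_sub_cancel, ← Nat.cast_sum, sum_Icc_choose_sub] at hcheb
  calc (∑ r ∈ Icc 1 Λ, (L r : ℝ)) / (t + 1)
      = (∑ r ∈ Icc 1 Λ, (L r : ℝ)) * (Λ.choose (t + 1) / (Λ - 1).choose t) / Λ := by
        rw [choose_succ_div_choose_pred ht]
        field_simp
    _ = (∑ r ∈ Icc 1 Λ, (L r : ℝ)) * Λ.choose (t + 1) / (Λ * (Λ - 1).choose t) := by ring
    _ ≤ Λ * (∑ r ∈ Icc 1 Λ, (L r : ℝ) * (Λ - r).choose t) / (Λ * (Λ - 1).choose t) :=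
        div_le_div_of_nonneg_right hcheb (by positivity)
    _ = sharedCacheRate Λ t L := by
        rw [mul_div_mul_left _ _ (by positivity), sharedCacheRate_eq]

theorem uniform_profile_minimizes_rate_general (Λ t K : ℕ) (L : ℕ → ℕ)
    (ht : t ≤ Λ - 1) (hdvd : Λ ∣ K)
    (hmono : ∀ r s, 1 ≤ r → r ≤ s → s ≤ Λ → L s ≤ L r)
    (hsum : ∑ r ∈ Finset.Icc 1 Λ, L r = K) :
    (K : ℝ) / (t + 1) ≤
      (∑ r ∈ Finset.Icc 1 (Λ - t), (L r : ℝ) * (Λ - r).choose t) / ((Λ - 1).choose t) ∧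
    (∑ r ∈ Finset.Icc 1 (Λ - t), ((K / Λ : ℕ) : ℝ) * (Λ - r).choose t) / ((Λ - 1).choose t)
      = (K : ℝ) / (t + 1) := by
  have hanti : AntitoneOn L (Icc 1 Λ) := fun r hr s hs hrs =>
    hmono r s (mem_Icc.mp hr).1 hrs (mem_Icc.mp hs).2
  refine ⟨?_, ?_⟩
  · have := sum_div_succ_le_sharedCacheRate ht hanti
    rwa [← Nat.cast_sum, hsum] at this
  · change sharedCacheRate Λ t (fun _ => K / Λ) = _
    rw [sharedCacheRate_const ht, ← Nat.cast_mul, Nat.div_mul_cancel hdvd]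

theorem uniform_profile_minimizes_rate (Λ t K : ℕ) (L : ℕ → ℕ) (hΛ : 2 ≤ Λ)
    (ht : t ≤ Λ - 1) (hdvd : Λ ∣ K)
    (hmono : ∀ r s, 1 ≤ r → r ≤ s → s ≤ Λ → L s ≤ L r)
    (hsum : ∑ r ∈ Finset.Icc 1 Λ, L r = K) :
    (K : ℝ) / (t + 1) ≤
      (∑ r ∈ Finset.Icc 1 (Λ - t), (L r : ℝ) * (Λ - r).choose t) / ((Λ - 1).choose t) ∧
    (∑ r ∈ Finset.Icc 1 (Λ - t), ((K / Λ : ℕ) : ℝ) * (Λ - r).choose t) / ((Λ - 1).choose t)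
      = (K : ℝ) / (t + 1) :=
  uniform_profile_minimizes_rate_general Λ t K L ht hdvd hmono hsum
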